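/- arXiv:0710.4976 — 2 statements merged into one kernel-verified Lean document; each statement's English description precedes it below -/
import Mathlib

section
/- For every m ∈ ℕ, the Carlitz q-Bernoulli number satisfies β_{m,q} = Σ_{k=0}^m (−1)^k ([k]_q!/[k+1]_q) · S_q(m,k). (This is Theorem 1 of the paper, with the value of ∫ binom(x,k)_q dμ_q corrected to (−1)^k q^{k−C(k+1,2)}/[k+1]_q, which removes the stray factor q.) -/
/-- The q-analogue `[n]_q = (1 - q^n)/(1 - q)` of a natural number. -/
def qnum {K : Type*} [Field K] (q : K) (n : ℕ) : K := (1 - q ^ n) / (1 - q)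

/-- The q-factorial `[n]_q! = ∏_{j=1}^n [j]_q`. -/
def qfact {K : Type*} [Field K] (q : K) (n : ℕ) : K :=
  ∏ j ∈ Finset.range n, qnum q (j + 1)

/-- The Gaussian binomial coefficient, `0` for `k > n`. -/
def qbinom {K : Type*} [Field K] (q : K) (n k : ℕ) : K :=
  if k ≤ n then qfact q n / (qfact q k * qfact q (n - k)) else 0

/-- The q-Stirling number of the second kind
`S_q(n,k) = (q^{-C(k,2)}/[k]_q!) Σ_{j=0}^k (-1)^j q^{C(j,2)} binom(k,j)_q [k-j]_q^n`. -/
def qStirling2 {K : Type*} [Field K] (q : K) (n k : ℕ) : K :=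
  (q ^ Nat.choose k 2)⁻¹ / qfact q k *
    ∑ j ∈ Finset.range (k + 1),
      (-1 : K) ^ j * q ^ Nat.choose j 2 * qbinom q k j * (qnum q (k - j)) ^ n

/-!
Carlitz's β_m is the q-Volkenborn integral ∫ [x]_q^m dμ_q(x). In the variable X = q^x this integral
is the linear functional on K[X] with ∫ X^t = (t+1)/[t+1]_q, whose difference equation
q ∫ f(qX) - ∫ f(X) = (q - 1)(f(1) + f'(1)) is exactly Carlitz's recursion when f = [x]_q^k,
because [x]_q vanishes at X = 1 and q[x]_q + 1 = [x]_q(qX).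

The right-hand side is also a linear functional of [x]_q^m, since S_q(m,k) is a normalised k-th
q-difference of [x]_q^m; so it suffices to compare both functionals on X^t for t ≤ m. There Gauss's
q-binomial theorem turns the k-th q-difference into (1 - q^t)(1 - q^(t-1))⋯(1 - q^(t-k+1)), and the
resulting sum over k telescopes to (t+1)/[t+1]_q.
-/

open Polynomial Finset

lemma Polynomial.linearMap_apply_eq_of_X_pow {R M : Type*} [Semiring R] [AddCommMonoid M]
    [Module R M] {φ ψ : R[X] →ₗ[R] M} {m : ℕ} (h : ∀ t ≤ m, φ (X ^ t) = ψ (X ^ t)) {p : R[X]}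
    (hp : p.natDegree ≤ m) : φ p = ψ p := by
  rw [p.as_sum_range' (m + 1) (Nat.lt_succ_of_le hp)]
  simp only [map_sum, ← smul_X_eq_monomial, map_smul]
  exact sum_congr rfl fun t ht => by rw [h t (Nat.le_of_lt_succ (mem_range.1 ht))]

section
variable {K : Type*} [Field K] {q : K}

lemma one_sub_pow_ne_zero (hq : ∀ n : ℕ, 1 ≤ n → q ^ n ≠ 1) {n : ℕ} (hn : 1 ≤ n) :
    1 - q ^ n ≠ 0 :=
  sub_ne_zero.2 (hq n hn).symm

lemma one_sub_ne_zero (hq : ∀ n : ℕ, 1 ≤ n → q ^ n ≠ 1) : 1 - q ≠ 0 := by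
  simpa using one_sub_pow_ne_zero hq le_rfl

lemma qnum_ne_zero (hq : ∀ n : ℕ, 1 ≤ n → q ^ n ≠ 1) {n : ℕ} (hn : 1 ≤ n) : qnum q n ≠ 0 :=
  div_ne_zero (one_sub_pow_ne_zero hq hn) (one_sub_ne_zero hq)

lemma qfact_zero (q : K) : qfact q 0 = 1 :=
  prod_range_zero _

lemma qfact_succ (q : K) (n : ℕ) : qfact q (n + 1) = qfact q n * qnum q (n + 1) :=
  prod_range_succ _ _

lemma qfact_ne_zero (hq : ∀ n : ℕ, 1 ≤ n → q ^ n ≠ 1) (n : ℕ) : qfact q n ≠ 0 :=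
  prod_ne_zero_iff.2 fun _ _ => qnum_ne_zero hq (Nat.le_add_left 1 _)

lemma qbinom_zero_right (hq : ∀ n : ℕ, 1 ≤ n → q ^ n ≠ 1) (n : ℕ) : qbinom q n 0 = 1 := by
  rw [qbinom, if_pos n.zero_le, Nat.sub_zero, qfact_zero, one_mul,
    div_self (qfact_ne_zero hq n)]

lemma qbinom_self (hq : ∀ n : ℕ, 1 ≤ n → q ^ n ≠ 1) (n : ℕ) : qbinom q n n = 1 := by
  rw [qbinom, if_pos le_rfl, Nat.sub_self, qfact_zero, mul_one,
    div_self (qfact_ne_zero hq n)]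

lemma qbinom_of_lt (q : K) {n k : ℕ} (h : n < k) : qbinom q n k = 0 :=
  if_neg h.not_ge

lemma qbinom_succ_succ (hq : ∀ n : ℕ, 1 ≤ n → q ^ n ≠ 1) (n k : ℕ) :
    qbinom q (n + 1) (k + 1) = qbinom q n (k + 1) + q ^ (n - k) * qbinom q n k := by
  rcases lt_trichotomy k n with hkn | rfl | hnk
  · obtain ⟨d, rfl⟩ : ∃ d, n = k + d + 1 := ⟨n - k - 1, by omega⟩
    simp only [qbinom, if_pos (show k + 1 ≤ k + d + 1 + 1 by omega),
      if_pos (show k + 1 ≤ k + d + 1 by omega), if_pos (show k ≤ k + d + 1 by omega),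
      show k + d + 1 + 1 - (k + 1) = d + 1 by omega, show k + d + 1 - (k + 1) = d by omega,
      show k + d + 1 - k = d + 1 by omega, qfact_succ q (k + d + 1), qfact_succ q k, qfact_succ q d]
    have := one_sub_ne_zero hq
    have hpascal : qnum q (k + d + 1 + 1) = qnum q (d + 1) + q ^ (d + 1) * qnum q (k + 1) := by
      simp only [qnum]; field_simp; ring
    have := qfact_ne_zero hq k
    have := qfact_ne_zero hq d
    have := qnum_ne_zero hq (n := k + 1) (by omega)
    have := qnum_ne_zero hq (n := d + 1) (by omega)
    field_simp
    rw [hpascal]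
    ring
  · rw [qbinom_of_lt q (Nat.lt_succ_self k), Nat.sub_self, pow_zero, one_mul, zero_add,
      qbinom_self hq, qbinom_self hq]
  · rw [qbinom_of_lt q (by omega), qbinom_of_lt q (by omega), qbinom_of_lt q hnk, mul_zero,
      add_zero]

lemma sum_qbinom_mul_pow_eq_prod (hq : ∀ n : ℕ, 1 ≤ n → q ^ n ≠ 1) (x : K) (k : ℕ) :
    ∑ j ∈ range (k + 1), (-1) ^ j * q ^ j.choose 2 * qbinom q k j * x ^ (k - j) =
      ∏ i ∈ range k, (x - q ^ i) := by
  induction k with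
  | zero => simp [qbinom_self hq]
  | succ k ih =>
    -- Generalising the coefficients keeps `simp` from unfolding `qbinom`.
    obtain ⟨a, ha⟩ : ∃ a : ℕ → ℕ → K, ∀ n j, (-1) ^ j * q ^ j.choose 2 * qbinom q n j = a n j :=
      ⟨_, fun _ _ => rfl⟩
    simp only [ha] at ih ⊢
    have hpascal : ∀ j ≤ k, a (k + 1) (j + 1) = a k (j + 1) - q ^ k * a k j := by
      intro j hj
      have hpow : q ^ (k - j) * q ^ j = q ^ k := by rw [← pow_add, Nat.sub_add_cancel hj]
      simp only [← ha, qbinom_succ_succ hq, Nat.choose_succ_succ', Nat.choose_one_right, pow_succ,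
        pow_add]
      linear_combination (-(-1) ^ j * q ^ j.choose 2 * qbinom q k j) * hpow
    have hx : x * ∑ j ∈ range (k + 1), a k j * x ^ (k - j) =
        ∑ j ∈ range (k + 1), a k (j + 1) * x ^ (k - j) + x ^ (k + 1) := calc
      _ = ∑ j ∈ range (k + 2), a k j * x ^ (k + 1 - j) := by
        rw [sum_range_succ _ (k + 1), ← ha, qbinom_of_lt q (Nat.lt_succ_self k), mul_sum]
        simp only [mul_zero, zero_mul, add_zero]
        refine sum_congr rfl fun j hj => ?_
        rw [show k + 1 - j = k - j + 1 by have := mem_range.1 hj; omega, pow_succ]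
        ring
      _ = _ := by simp [sum_range_succ', ← ha, qbinom_zero_right hq]
    have hsucc : ∑ j ∈ range (k + 1), a (k + 1) (j + 1) * x ^ (k + 1 - (j + 1)) =
        ∑ j ∈ range (k + 1), a k (j + 1) * x ^ (k - j) -
          q ^ k * ∑ j ∈ range (k + 1), a k j * x ^ (k - j) := by
      rw [mul_sum, ← sum_sub_distrib]
      refine sum_congr rfl fun j hj => ?_
      rw [hpascal j (by have := mem_range.1 hj; omega), Nat.add_sub_add_right]
      ring
    rw [prod_range_succ, ← ih, sum_range_succ', hsucc, mul_sub, mul_comm _ x, hx, ← ha (k + 1) 0,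
      qbinom_zero_right hq]
    simp only [pow_zero, Nat.choose_zero_succ, mul_one, Nat.sub_zero]
    ring

/-- `(1 - q^t)(1 - q^(t-1))⋯(1 - q^(t-k+1))`, written with quotients so that no truncated
subtraction occurs in the exponents. -/
def qDescPochhammer (q : K) (t k : ℕ) : K :=
  ∏ i ∈ range k, (1 - q ^ t / q ^ i)

lemma qDescPochhammer_succ_right (q : K) (t k : ℕ) :
    qDescPochhammer q t (k + 1) = qDescPochhammer q t k * (1 - q ^ t / q ^ k) :=
  prod_range_succ _ _

lemma qDescPochhammer_succ_succ (hq0 : q ≠ 0) (t k : ℕ) :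
    qDescPochhammer q (t + 1) (k + 1) = (1 - q ^ (t + 1)) * qDescPochhammer q t k := by
  simp only [qDescPochhammer, prod_range_succ', pow_zero, div_one]
  rw [mul_comm]
  congr 1
  refine prod_congr rfl fun i _ => ?_
  rw [pow_succ, pow_succ, mul_div_mul_right _ _ hq0]

lemma qDescPochhammer_of_lt (hq0 : q ≠ 0) {t k : ℕ} (h : t < k) : qDescPochhammer q t k = 0 :=
  prod_eq_zero (mem_range.2 h) (by rw [div_self (pow_ne_zero t hq0), sub_self])

lemma sum_range_pow_div_pow_mul_qDescPochhammer (hq0 : q ≠ 0) {t N : ℕ} (h : t < N) :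
    ∑ k ∈ range N, q ^ t / q ^ k * qDescPochhammer q t k = 1 := by
  have hstep : ∀ k, q ^ t / q ^ k * qDescPochhammer q t k =
      qDescPochhammer q t k - qDescPochhammer q t (k + 1) := fun k => by
    rw [qDescPochhammer_succ_right]; ring
  simp only [hstep, sum_range_sub', qDescPochhammer_of_lt hq0 h, sub_zero]
  exact prod_range_zero _

lemma sum_range_qDescPochhammer_succ_div (hq0 : q ≠ 0) (hq : ∀ n : ℕ, 1 ≤ n → q ^ n ≠ 1)
    {t N : ℕ} (h : t ≤ N) :
    ∑ k ∈ range N, qDescPochhammer q t (k + 1) / (1 - q ^ (k + 1)) = t := by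
  induction t with
  | zero =>
    simp [qDescPochhammer, prod_range_succ']
  | succ t ih =>
    have hdiff : ∀ k ∈ range N, qDescPochhammer q (t + 1) (k + 1) / (1 - q ^ (k + 1)) =
        qDescPochhammer q t (k + 1) / (1 - q ^ (k + 1)) +
          q ^ t / q ^ k * qDescPochhammer q t k := by
      intro k _
      have : 1 - q ^ (k + 1) ≠ 0 := one_sub_pow_ne_zero hq (by omega)
      rw [qDescPochhammer_succ_succ hq0, qDescPochhammer_succ_right]
      field_simp
      ring
    rw [sum_congr rfl hdiff, sum_add_distrib, ih (by omega),
      sum_range_pow_div_pow_mul_qDescPochhammer hq0 (by omega)]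
    push_cast
    ring

lemma sum_range_qDescPochhammer_div_qnum (hq0 : q ≠ 0) (hq : ∀ n : ℕ, 1 ≤ n → q ^ n ≠ 1)
    {t m : ℕ} (h : t ≤ m) :
    ∑ k ∈ range (m + 1), qDescPochhammer q t k / qnum q (k + 1) = (t + 1) / qnum q (t + 1) := by
  have := one_sub_ne_zero hq
  have hqt : 1 - q ^ (t + 1) ≠ 0 := one_sub_pow_ne_zero hq (by omega)
  have hterm : ∀ k ∈ range (m + 1), qDescPochhammer q t k / qnum q (k + 1) =
      (1 - q) / (1 - q ^ (t + 1)) * (qDescPochhammer q (t + 1) (k + 1) / (1 - q ^ (k + 1))) := by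
    intro k _
    have : 1 - q ^ (k + 1) ≠ 0 := one_sub_pow_ne_zero hq (by omega)
    rw [qDescPochhammer_succ_succ hq0, qnum]
    field_simp
  rw [sum_congr rfl hterm, ← mul_sum, sum_range_qDescPochhammer_succ_div hq0 hq (by omega), qnum]
  push_cast
  field_simp

lemma prod_range_pow_sub_pow (hq0 : q ≠ 0) (t k : ℕ) :
    ∏ i ∈ range k, (q ^ t - q ^ i) = (-1) ^ k * q ^ k.choose 2 * qDescPochhammer q t k := by
  have hfactor : ∀ i ∈ range k, q ^ t - q ^ i = -1 * q ^ i * (1 - q ^ t / q ^ i) := fun i _ => by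
    field_simp; ring
  rw [prod_congr rfl hfactor, prod_mul_distrib, prod_mul_distrib, prod_const, card_range,
    prod_pow_eq_pow_sum, sum_range_id, ← Nat.choose_two_right, qDescPochhammer]

/-- The q-Volkenborn integral `f ↦ ∫ f(q^x) dμ_q(x)`, with `X` standing for `q^x`. -/
def qVolkenborn (q : K) : K[X] →ₗ[K] K :=
  lsum fun t => ((t + 1 : K) / qnum q (t + 1)) • LinearMap.id

lemma qVolkenborn_monomial (q : K) (t : ℕ) (a : K) :
    qVolkenborn q (monomial t a) = (t + 1) / qnum q (t + 1) * a := by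
  simp [qVolkenborn]

lemma qVolkenborn_X_pow (q : K) (t : ℕ) : qVolkenborn q (X ^ t) = (t + 1) / qnum q (t + 1) := by
  rw [X_pow_eq_monomial, qVolkenborn_monomial, mul_one]

lemma qVolkenborn_one (hq1 : q ≠ 1) : qVolkenborn q 1 = 1 := by
  rw [← pow_zero X, qVolkenborn_X_pow, qnum]
  simp [sub_ne_zero.2 hq1.symm]

lemma qVolkenborn_comp_C_mul_X_sub (hq : ∀ n : ℕ, 1 ≤ n → q ^ n ≠ 1) (p : K[X]) :
    q * qVolkenborn q (p.comp (C q * X)) - qVolkenborn q p =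
      (q - 1) * (p.eval 1 + (derivative p).eval 1) := by
  induction p using Polynomial.induction_on' with
  | add p p' hp hp' =>
    simp only [add_comp, map_add, eval_add]
    linear_combination hp + hp'
  | monomial t a =>
    have hcomp : (monomial t a).comp (C q * X) = monomial t (a * q ^ t) := by
      rw [monomial_comp, mul_pow, ← C_pow, ← mul_assoc, ← C_mul, C_mul_X_pow_eq_monomial]
    have hqt : 1 - q ^ (t + 1) ≠ 0 := one_sub_pow_ne_zero hq (by omega)
    have := one_sub_ne_zero hq
    rw [hcomp, qVolkenborn_monomial, qVolkenborn_monomial, derivative_monomial, eval_monomial,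
      eval_monomial, one_pow, one_pow, qnum]
    field_simp
    ring

/-- `[x]_q = (1 - q^x)/(1 - q)` as a polynomial in `X = q^x`. -/
noncomputable def qNumPoly (q : K) : K[X] :=
  C (1 - q)⁻¹ * (1 - X)

lemma eval_qNumPoly (q : K) (n : ℕ) : (qNumPoly q).eval (q ^ n) = qnum q n := by
  simp [qNumPoly, qnum, div_eq_inv_mul]

lemma natDegree_qNumPoly_pow_le (q : K) (n : ℕ) : (qNumPoly q ^ n).natDegree ≤ n := by
  simpa using natDegree_pow_le_of_le n
    (show (qNumPoly q).natDegree ≤ 1 by unfold qNumPoly; compute_degree)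

lemma qNumPoly_comp_C_mul_X (hq1 : q ≠ 1) : (qNumPoly q).comp (C q * X) = C q * qNumPoly q + 1 := by
  have : (1 : K) - q ≠ 0 := sub_ne_zero.2 hq1.symm
  simp only [qNumPoly, mul_comp, C_comp, sub_comp, one_comp, X_comp]
  have hu : C (1 - q)⁻¹ = C q * C (1 - q)⁻¹ + 1 := by
    rw [← C_mul, ← C_1, ← C_add]
    congr 1
    field_simp
    ring
  linear_combination hu

lemma qVolkenborn_qNumPoly_pow_recursion (hq : ∀ n : ℕ, 1 ≤ n → q ^ n ≠ 1) {k : ℕ} (hk : 1 ≤ k) :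
    q * ∑ i ∈ range (k + 1), (k.choose i : K) * q ^ i * qVolkenborn q (qNumPoly q ^ i) -
      qVolkenborn q (qNumPoly q ^ k) = if k = 1 then 1 else 0 := by
  have hq1 : q ≠ 1 := by simpa using hq 1 le_rfl
  have hsum : ∑ i ∈ range (k + 1), (k.choose i : K) * q ^ i * qVolkenborn q (qNumPoly q ^ i) =
      qVolkenborn q ((qNumPoly q ^ k).comp (C q * X)) := by
    rw [pow_comp, qNumPoly_comp_C_mul_X hq1, add_pow, map_sum]
    refine sum_congr rfl fun i _ => ?_
    rw [one_pow, mul_one, mul_pow, ← C_pow, ← map_natCast C, mul_right_comm (C _), ← C_mul, C_mul',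
      map_smul, smul_eq_mul]
    ring
  rw [hsum, qVolkenborn_comp_C_mul_X_sub hq, derivative_pow]
  have heval : (qNumPoly q).eval 1 = 0 := by simp [qNumPoly]
  have hderiv : (derivative (qNumPoly q)).eval 1 = -(1 - q)⁻¹ := by simp [qNumPoly]
  simp only [eval_pow, eval_mul, eval_C, heval, hderiv]
  obtain ⟨j, rfl⟩ : ∃ j, k = j + 1 := ⟨k - 1, by omega⟩
  rcases j with _ | j
  · have := one_sub_ne_zero hq
    simp
    field_simp
    ring
  · simp

/-- The coefficients of the q-Newton expansion
`f(q^x) = Σ_k q^C(k,2) [k]_q! (qNewtonCoeff q k f) binom(x,k)_q`. -/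
noncomputable def qNewtonCoeff (q : K) (k : ℕ) : K[X] →ₗ[K] K :=
  ((q ^ k.choose 2)⁻¹ / qfact q k) • ∑ j ∈ range (k + 1),
    ((-1) ^ j * q ^ j.choose 2 * qbinom q k j) • leval (q ^ (k - j))

lemma qNewtonCoeff_apply (q : K) (k : ℕ) (f : K[X]) :
    qNewtonCoeff q k f = (q ^ k.choose 2)⁻¹ / qfact q k * ∑ j ∈ range (k + 1),
      (-1) ^ j * q ^ j.choose 2 * qbinom q k j * f.eval (q ^ (k - j)) := by
  simp [qNewtonCoeff]

lemma qStirling2_eq_qNewtonCoeff (q : K) (n k : ℕ) :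
    qStirling2 q n k = qNewtonCoeff q k (qNumPoly q ^ n) := by
  simp only [qStirling2, qNewtonCoeff_apply, eval_pow, eval_qNumPoly]

lemma qNewtonCoeff_X_pow (hq0 : q ≠ 0) (hq : ∀ n : ℕ, 1 ≤ n → q ^ n ≠ 1) (k t : ℕ) :
    qNewtonCoeff q k (X ^ t) = (-1) ^ k * qDescPochhammer q t k / qfact q k := by
  have hpow : ∀ j, (X ^ t : K[X]).eval (q ^ (k - j)) = (q ^ t) ^ (k - j) := fun j => by
    rw [eval_pow, eval_X, pow_right_comm]
  simp only [qNewtonCoeff_apply, hpow, sum_qbinom_mul_pow_eq_prod hq, prod_range_pow_sub_pow hq0]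
  field_simp

lemma qVolkenborn_eq_sum_qNewtonCoeff (hq0 : q ≠ 0) (hq : ∀ n : ℕ, 1 ≤ n → q ^ n ≠ 1) {m : ℕ}
    {f : K[X]} (hf : f.natDegree ≤ m) :
    qVolkenborn q f =
      ∑ k ∈ range (m + 1), (-1) ^ k * (qfact q k / qnum q (k + 1)) * qNewtonCoeff q k f := by
  have key := linearMap_apply_eq_of_X_pow (φ := qVolkenborn q)
    (ψ := ∑ k ∈ range (m + 1), ((-1) ^ k * (qfact q k / qnum q (k + 1))) • qNewtonCoeff q k)
    (fun t ht => ?_) hf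
  · simpa using key
  have hterm : ∀ k ∈ range (m + 1), (-1) ^ k * (qfact q k / qnum q (k + 1)) *
      qNewtonCoeff q k (X ^ t) = qDescPochhammer q t k / qnum q (k + 1) := fun k _ => by
    have := qfact_ne_zero hq k
    rw [qNewtonCoeff_X_pow hq0 hq]
    field_simp
    rw [← pow_mul, pow_mul', neg_one_sq, one_pow, one_mul]
  simp only [LinearMap.sum_apply, LinearMap.smul_apply, smul_eq_mul]
  rw [sum_congr rfl hterm, sum_range_qDescPochhammer_div_qnum hq0 hq ht, qVolkenborn_X_pow]

end

theorem eq_of_carlitz_recursion {K : Type*} [Field K] {q : K} (hq : ∀ n : ℕ, 1 ≤ n → q ^ n ≠ 1)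
    {r β β' : ℕ → K} (h0 : β 0 = β' 0)
    (hβ : ∀ k, 1 ≤ k → q * ∑ i ∈ range (k + 1), (k.choose i : K) * q ^ i * β i - β k = r k)
    (hβ' : ∀ k, 1 ≤ k → q * ∑ i ∈ range (k + 1), (k.choose i : K) * q ^ i * β' i - β' k = r k) :
    β = β' := by
  funext n
  induction n using Nat.strong_induction_on with
  | _ n ih =>
    rcases n with _ | k
    · exact h0
    have hsum : ∑ i ∈ range (k + 1), ((k + 1).choose i : K) * q ^ i * β i =
        ∑ i ∈ range (k + 1), ((k + 1).choose i : K) * q ^ i * β' i :=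
      sum_congr rfl fun i hi => by rw [ih i (mem_range.1 hi)]
    have hdiff := (hβ (k + 1) (by omega)).trans (hβ' (k + 1) (by omega)).symm
    rw [sum_range_succ _ (k + 1), sum_range_succ _ (k + 1), hsum] at hdiff
    have hne : q ^ (k + 2) - 1 ≠ 0 := sub_ne_zero.2 (hq (k + 2) (by omega))
    refine mul_left_cancel₀ hne ?_
    simp only [Nat.choose_self, Nat.cast_one, one_mul] at hdiff
    linear_combination hdiff

theorem carlitz_qBernoulli_eq_sum_qStirling2_general
    {K : Type*} [Field K] (q : K) (hq0 : q ≠ 0)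
    (hq : ∀ n : ℕ, 1 ≤ n → q ^ n ≠ 1)
    (β : ℕ → K) (hβ0 : β 0 = 1)
    (hβ : ∀ k : ℕ, 1 ≤ k →
      q * ∑ i ∈ Finset.range (k + 1), (Nat.choose k i : K) * q ^ i * β i - β k =
        if k = 1 then 1 else 0)
    (m : ℕ) :
    β m = ∑ k ∈ Finset.range (m + 1),
      (-1 : K) ^ k * (qfact q k / qnum q (k + 1)) * qStirling2 q m k := by
  have hβ_eq : β = fun n => qVolkenborn q (qNumPoly q ^ n) := by
    refine eq_of_carlitz_recursion hq ?_ hβ fun k hk => qVolkenborn_qNumPoly_pow_recursion hq hk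
    rw [hβ0, pow_zero, qVolkenborn_one (by simpa using hq 1 le_rfl)]
  simp only [hβ_eq, qStirling2_eq_qNewtonCoeff,
    qVolkenborn_eq_sum_qNewtonCoeff hq0 hq (natDegree_qNumPoly_pow_le q m)]

/-- **Theorem 1** (corrected): the Carlitz q-Bernoulli numbers, determined by
`β_0 = 1` and `q(qβ+1)^k - β_k = δ_{1,k}`, satisfy
`β_m = Σ_{k=0}^m (-1)^k ([k]_q!/[k+1]_q) S_q(m,k)`. -/
theorem carlitz_qBernoulli_eq_sum_qStirling2
    {K : Type*} [Field K] [CharZero K] (q : K) (hq0 : q ≠ 0)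
    (hq : ∀ n : ℕ, 1 ≤ n → q ^ n ≠ 1)
    (β : ℕ → K) (hβ0 : β 0 = 1)
    (hβ : ∀ k : ℕ, 1 ≤ k →
      q * ∑ i ∈ Finset.range (k + 1), (Nat.choose k i : K) * q ^ i * β i - β k =
        if k = 1 then 1 else 0)
    (m : ℕ) :
    β m = ∑ k ∈ Finset.range (m + 1),
      (-1 : K) ^ k * (qfact q k / qnum q (k + 1)) * qStirling2 q m k :=
  carlitz_qBernoulli_eq_sum_qStirling2_general q hq0 hq β hβ0 hβ m
end

section
/- For all k ≥ 1 and n, x ∈ ℕ, the k-fold multivariate q-Volkenborn (Riemann) sums converge: in ℚ_p, lim_{N→∞} (1/[p^N]_q^k) Σ_{x_1=0}^{p^N−1} ⋯ Σ_{x_k=0}^{p^N−1} [x_1+⋯+x_k+x]_q^n · q^{x_1+⋯+x_k} · q^{Σ_{l=1}^k (k−l) x_l} = (1/(1−q)^n) Σ_{i=0}^n (−1)^i C(n,i) q^{i·x} ∏_{j=1}^k (i+j)/[i+j]_q. (This is the evaluation (25) ⇒ (26) of the multivariate p-adic q-integral defining the higher-order q-Bernoulli polynomial β^{(k)}_{n,q}(x).)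 -/
/-!
Expanding `[y]_q^n` by the binomial theorem turns every summand into a product of geometric
progressions in the separate variables, so the `k`-fold Riemann sum factors. Each factor
`[p^N]_{q^m} / [p^N]_q` equals `[m]_{q^{p^N}} / [m]_q`, a polynomial in `q^{p^N}` divided by a
constant. Under `‖q - 1‖ < p^{-1/(p-1)}` one has `‖q^m - 1‖ = ‖m‖ ‖q - 1‖`, hence `q^m ≠ 1` for
`m ≠ 0` and `q^{p^N} → 1`; the limit is the value of that polynomial at `1`, where `[m]_1 = m`.
-/

open Finset Filter Topology

section qnum

variable {K : Type*} [Field K]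

lemma qnum_pow_eq_sum (q : K) (y n : ℕ) :
    qnum q y ^ n =
      1 / (1 - q) ^ n * ∑ i ∈ range (n + 1), (-1) ^ i * (n.choose i : K) * q ^ (y * i) := by
  rw [qnum, div_pow, one_div_mul_eq_div]
  congr 1
  rw [sub_eq_neg_add, add_pow]
  refine sum_congr rfl fun i _ => ?_
  rw [neg_pow, one_pow, mul_one, ← pow_mul]
  ring

lemma geom_sum_pow_div_qnum_comm (q : K) {m P : ℕ} (hq : q ≠ 1) (hm : q ^ m ≠ 1)
    (hP : q ^ P ≠ 1) :
    (∑ u ∈ range P, (q ^ m) ^ u) / qnum q P = (∑ s ∈ range m, (q ^ P) ^ s) / qnum q m := by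
  have h1 : 1 - q ≠ 0 := sub_ne_zero.mpr hq.symm
  have hm' : 1 - q ^ m ≠ 0 := sub_ne_zero.mpr hm.symm
  have hP' : 1 - q ^ P ≠ 0 := sub_ne_zero.mpr hP.symm
  rw [geom_sum_eq hm, geom_sum_eq hP, qnum, qnum, ← pow_mul, ← pow_mul, mul_comm P m]
  field_simp
  ring

lemma Fin.prod_univ_sub_eq_prod_Icc {M : Type*} [CommMonoid M] (f : ℕ → M) (k : ℕ) :
    ∏ l : Fin k, f (k - l) = ∏ j ∈ Icc 1 k, f j := by
  rw [Fin.prod_univ_eq_prod_range (fun l => f (k - l)), ← Finset.Ico_add_one_right_eq_Icc,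
    prod_Ico_eq_prod_range, Nat.add_sub_cancel, ← prod_range_reflect]
  refine prod_congr rfl fun l hl => ?_
  have := mem_range.mp hl
  congr 1
  omega

lemma qVolkenborn_summand_eq (q : K) (n x : ℕ) {k : ℕ} (v : Fin k → ℕ) :
    qnum q (∑ l, v l + x) ^ n * q ^ (∑ l, v l) * q ^ (∑ l : Fin k, (k - 1 - (l : ℕ)) * v l) =
      1 / (1 - q) ^ n * ∑ i ∈ range (n + 1),
        (-1) ^ i * (n.choose i : K) * q ^ (i * x) * ∏ l : Fin k, (q ^ (i + (k - l))) ^ v l := by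
  have hexp : ∀ i, (∑ l, v l + x) * i + (∑ l, v l + ∑ l : Fin k, (k - 1 - (l : ℕ)) * v l) =
      i * x + ∑ l : Fin k, (i + (k - l)) * v l := by
    intro i
    have hl : ∀ l : Fin k, (i + (k - l)) * v l = i * v l + (v l + (k - 1 - l) * v l) := by
      intro l
      rw [show k - (l : ℕ) = k - 1 - l + 1 by omega]
      ring
    simp only [hl, sum_add_distrib, ← mul_sum]
    ring
  rw [qnum_pow_eq_sum, mul_assoc, ← pow_add, mul_assoc, sum_mul]
  refine congrArg _ (sum_congr rfl fun i _ => ?_)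
  simp only [← pow_mul, prod_pow_eq_pow_sum]
  rw [mul_assoc, ← pow_add, mul_assoc _ (q ^ (i * x)), ← pow_add, hexp]

lemma qVolkenborn_riemannSum_eq (q : K) (hq : ∀ m, m ≠ 0 → q ^ m ≠ 1) (k n x : ℕ) {P : ℕ}
    (hP : P ≠ 0) :
    (1 / qnum q P) ^ k * ∑ v ∈ Fintype.piFinset (fun _ : Fin k => range P),
        qnum q (∑ l, v l + x) ^ n * q ^ (∑ l, v l) * q ^ (∑ l : Fin k, (k - 1 - (l : ℕ)) * v l) =
      1 / (1 - q) ^ n * ∑ i ∈ range (n + 1), (-1) ^ i * (n.choose i : K) * q ^ (i * x) *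
        ∏ j ∈ Icc 1 k, (∑ s ∈ range (i + j), (q ^ P) ^ s) / qnum q (i + j) := by
  simp_rw [qVolkenborn_summand_eq, ← mul_sum, sum_comm (s := Fintype.piFinset _), ← mul_sum]
  rw [mul_left_comm, mul_sum]
  refine congrArg _ (sum_congr rfl fun i _ => ?_)
  rw [← prod_univ_sum, mul_left_comm, ← Fin.prod_univ_sub_eq_prod_Icc]
  congr 1
  rw [← Fin.prod_const k (1 / qnum q P), ← prod_mul_distrib]
  refine prod_congr rfl fun l _ => ?_
  rw [one_div_mul_eq_div, geom_sum_pow_div_qnum_comm q (by simpa using hq 1 one_ne_zero)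
    (hq _ (by omega)) (hq P hP)]

end qnum

lemma sub_one_mul_padicValNat_lt (p : ℕ) [Fact p.Prime] {j : ℕ} (hj : j ≠ 0) :
    (p - 1) * padicValNat p j < j := by
  refine lt_of_le_of_lt ?_ (sub_one_mul_padicValNat_factorial_lt_of_ne_zero p hj)
  gcongr
  exact (padicValNat_dvd_iff_le (Nat.factorial_ne_zero j)).mp
    (pow_padicValNat_dvd.trans (Nat.dvd_factorial (Nat.pos_of_ne_zero hj) le_rfl))

namespace Padic

variable {p : ℕ} [hp : Fact p.Prime]

lemma norm_pow_lt_norm_natCast {t : ℚ_[p]} (ht : ‖t‖ < (p : ℝ) ^ (-(1 : ℝ) / ((p : ℝ) - 1)))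
    {j : ℕ} (hj : j ≠ 0) : ‖t‖ ^ j < ‖((j + 1 : ℕ) : ℚ_[p])‖ := by
  set r : ℝ := (p : ℝ) ^ (-(1 : ℝ) / ((p : ℝ) - 1))
  have hp1 : (1 : ℝ) < p := by exact_mod_cast hp.out.one_lt
  have hr1 : r ≤ 1 := Real.rpow_le_one_of_one_le_of_nonpos hp1.le
    (div_nonpos_of_nonpos_of_nonneg (by norm_num) (by linarith))
  have hrp : r ^ (p - 1) = (p : ℝ)⁻¹ := by
    rw [← Real.rpow_natCast, ← Real.rpow_mul (by positivity),
      Nat.cast_sub hp.out.one_le, Nat.cast_one, div_mul_cancel₀ _ (by linarith),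
      Real.rpow_neg_one]
  have hv := sub_one_mul_padicValNat_lt p j.add_one_ne_zero
  calc ‖t‖ ^ j < r ^ j := pow_lt_pow_left₀ ht (norm_nonneg t) hj
    _ ≤ r ^ ((p - 1) * padicValNat p (j + 1)) :=
        pow_le_pow_of_le_one (by positivity) hr1 (by omega)
    _ = ‖((j + 1 : ℕ) : ℚ_[p])‖ := by
        rw [pow_mul, hrp, norm_eq_zpow_neg_valuation (Nat.cast_ne_zero.mpr j.add_one_ne_zero),
          valuation_natCast, zpow_neg, zpow_natCast, inv_pow]

lemma norm_pow_mul_choose_lt {t : ℚ_[p]} (ht : ‖t‖ < (p : ℝ) ^ (-(1 : ℝ) / ((p : ℝ) - 1)))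
    (ht0 : t ≠ 0) {m j : ℕ} (hj : j ≠ 0) (hjm : j ≤ m) :
    ‖t ^ (j + 1) * ((m + 1).choose (j + 1) : ℚ_[p])‖ < ‖((m + 1 : ℕ) : ℚ_[p])‖ * ‖t‖ := by
  set c := ‖((m + 1).choose (j + 1) : ℚ_[p])‖
  have hchoose : c * ‖((j + 1 : ℕ) : ℚ_[p])‖ ≤ ‖((m + 1 : ℕ) : ℚ_[p])‖ := by
    rw [← norm_mul, ← Nat.cast_mul, ← Nat.add_one_mul_choose_eq, Nat.cast_mul, norm_mul]
    exact mul_le_of_le_one_right (norm_nonneg _) (IsUltrametricDist.norm_natCast_le_one _ _)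
  have hc : 0 < c := norm_pos_iff.mpr (Nat.cast_ne_zero.mpr (Nat.choose_pos (by omega)).ne')
  rw [norm_mul, norm_pow, pow_succ, mul_right_comm]
  refine mul_lt_mul_of_pos_right ?_ (norm_pos_iff.mpr ht0)
  calc ‖t‖ ^ j * c < ‖((j + 1 : ℕ) : ℚ_[p])‖ * c :=
        mul_lt_mul_of_pos_right (norm_pow_lt_norm_natCast ht hj) hc
    _ ≤ ‖((m + 1 : ℕ) : ℚ_[p])‖ := by rwa [mul_comm]

lemma norm_pow_sub_one {q : ℚ_[p]} (hq : ‖q - 1‖ < (p : ℝ) ^ (-(1 : ℝ) / ((p : ℝ) - 1)))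
    (m : ℕ) : ‖q ^ m - 1‖ = ‖(m : ℚ_[p])‖ * ‖q - 1‖ := by
  obtain rfl | hq1 := eq_or_ne q 1
  · simp
  set t := q - 1
  have ht0 : t ≠ 0 := sub_ne_zero.mpr hq1
  obtain _ | m := m
  · simp
  have hexpand : q ^ (m + 1) - 1 = ((m + 1 : ℕ) : ℚ_[p]) * t +
      ∑ i ∈ range m, t ^ (i + 2) * ((m + 1).choose (i + 2) : ℚ_[p]) := by
    rw [show q = t + 1 by ring, add_pow, sum_range_succ', sum_range_succ']
    simp only [one_pow, mul_one, pow_zero, pow_one, zero_add, tsub_zero, add_tsub_cancel_right,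
      Nat.choose_zero_right, Nat.choose_one_right, Nat.cast_one, Nat.cast_add]
    ring
  have hmain : 0 < ‖((m + 1 : ℕ) : ℚ_[p]) * t‖ :=
    norm_pos_iff.mpr (mul_ne_zero (Nat.cast_ne_zero.mpr m.add_one_ne_zero) ht0)
  have hrest : ‖∑ i ∈ range m, t ^ (i + 2) * ((m + 1).choose (i + 2) : ℚ_[p])‖ <
      ‖((m + 1 : ℕ) : ℚ_[p]) * t‖ := by
    obtain hm | hm := (range m).eq_empty_or_nonempty
    · simpa [hm] using hmain
    obtain ⟨i, hi, hle⟩ := IsUltrametricDist.exists_norm_finsetSum_le_of_nonempty hm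
      (fun i => t ^ (i + 2) * ((m + 1).choose (i + 2) : ℚ_[p]))
    rw [norm_mul]
    exact hle.trans_lt (norm_pow_mul_choose_lt hq ht0 i.add_one_ne_zero (mem_range.mp hi))
  rw [hexpand, IsUltrametricDist.norm_add_eq_max_of_norm_ne_norm hrest.ne', max_eq_left hrest.le,
    norm_mul]

lemma pow_ne_one_of_norm_sub_one_lt {q : ℚ_[p]}
    (hq : ‖q - 1‖ < (p : ℝ) ^ (-(1 : ℝ) / ((p : ℝ) - 1))) (hq1 : q ≠ 1) {m : ℕ} (hm : m ≠ 0) :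
    q ^ m ≠ 1 := by
  rw [← sub_ne_zero, ← norm_pos_iff, norm_pow_sub_one hq]
  exact mul_pos (norm_pos_iff.mpr (Nat.cast_ne_zero.mpr hm))
    (norm_pos_iff.mpr (sub_ne_zero.mpr hq1))

lemma tendsto_pow_prime_pow {q : ℚ_[p]}
    (hq : ‖q - 1‖ < (p : ℝ) ^ (-(1 : ℝ) / ((p : ℝ) - 1))) :
    Tendsto (fun N : ℕ => q ^ p ^ N) atTop (𝓝 1) := by
  rw [tendsto_iff_norm_sub_tendsto_zero]
  have hp1 : (p : ℝ)⁻¹ < 1 := inv_lt_one_of_one_lt₀ (by exact_mod_cast hp.out.one_lt)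
  simp_rw [norm_pow_sub_one hq, Nat.cast_pow, norm_p_pow, zpow_neg, zpow_natCast, ← inv_pow]
  simpa using (tendsto_pow_atTop_nhds_zero_of_lt_one (by positivity) hp1).mul_const ‖q - 1‖

end Padic

-- The paper's variable `x_l`, `1 ≤ l ≤ k`, is `v l` for `l : Fin k`, with weight `k - 1 - l`.
theorem multivariate_qVolkenborn_qBernoulliPoly_general
    (p : ℕ) [Fact p.Prime] (q : ℤ_[p]) (hq1 : q ≠ 1)
    (hq : ‖q - 1‖ < (p : ℝ) ^ (-(1 : ℝ) / ((p : ℝ) - 1)))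
    (k : ℕ) (n x : ℕ) :
    Filter.Tendsto
      (fun N : ℕ => (1 / qnum (q : ℚ_[p]) (p ^ N)) ^ k *
        ∑ v ∈ Fintype.piFinset (fun _ : Fin k => Finset.range (p ^ N)),
          (qnum (q : ℚ_[p]) ((∑ l, v l) + x)) ^ n * (q : ℚ_[p]) ^ (∑ l, v l) *
            (q : ℚ_[p]) ^ (∑ l : Fin k, (k - 1 - (l : ℕ)) * v l))
      Filter.atTop
      (nhds ((1 / (1 - (q : ℚ_[p])) ^ n) * ∑ i ∈ Finset.range (n + 1),
        (-1 : ℚ_[p]) ^ i * (Nat.choose n i : ℚ_[p]) * (q : ℚ_[p]) ^ (i * x) *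
          ∏ j ∈ Finset.Icc 1 k, ((i + j : ℕ) : ℚ_[p]) / qnum (q : ℚ_[p]) (i + j))) := by
  have hq' : ‖(q : ℚ_[p]) - 1‖ < (p : ℝ) ^ (-(1 : ℝ) / ((p : ℝ) - 1)) := by
    simpa [PadicInt.norm_def] using hq
  have hq1' : (q : ℚ_[p]) ≠ 1 := by
    rw [← PadicInt.coe_one]
    exact mt PadicInt.ext hq1
  have hcont : Continuous fun z : ℚ_[p] => 1 / (1 - (q : ℚ_[p])) ^ n *
      ∑ i ∈ range (n + 1), (-1) ^ i * (n.choose i : ℚ_[p]) * (q : ℚ_[p]) ^ (i * x) *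
        ∏ j ∈ Icc 1 k, (∑ s ∈ range (i + j), z ^ s) / qnum (q : ℚ_[p]) (i + j) := by
    fun_prop
  convert (hcont.tendsto 1).comp (Padic.tendsto_pow_prime_pow hq') using 1
  · funext N
    exact qVolkenborn_riemannSum_eq _ (fun m => Padic.pow_ne_one_of_norm_sub_one_lt hq' hq1')
      k n x (pow_ne_zero N (Fact.out : p.Prime).ne_zero)
  · simp

/-- **Evaluation (25) ⇒ (26)**: the k-fold multivariate q-Volkenborn Riemann sums
defining the higher-order q-Bernoulli polynomial `β^{(k)}_{n,q}(x)` converge in `ℚ_p`: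
`lim_N (1/[p^N]_q)^k Σ_{x_1,…,x_k < p^N} [x_1+⋯+x_k+x]_q^n q^{x_1+⋯+x_k} q^{Σ_l (k-l)x_l}
 = (1/(1-q)^n) Σ_{i=0}^n (-1)^i C(n,i) q^{ix} ∏_{j=1}^k (i+j)/[i+j]_q`
(here the variable `x_l`, `1 ≤ l ≤ k`, is indexed by `l : Fin k` with weight `k-1-l`). -/
theorem multivariate_qVolkenborn_qBernoulliPoly
    (p : ℕ) [Fact p.Prime] (q : ℤ_[p]) (hq1 : q ≠ 1)
    (hq : ‖q - 1‖ < (p : ℝ) ^ (-(1 : ℝ) / ((p : ℝ) - 1)))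
    (k : ℕ) (hk : 1 ≤ k) (n x : ℕ) :
    Filter.Tendsto
      (fun N : ℕ => (1 / qnum (q : ℚ_[p]) (p ^ N)) ^ k *
        ∑ v ∈ Fintype.piFinset (fun _ : Fin k => Finset.range (p ^ N)),
          (qnum (q : ℚ_[p]) ((∑ l, v l) + x)) ^ n * (q : ℚ_[p]) ^ (∑ l, v l) *
            (q : ℚ_[p]) ^ (∑ l : Fin k, (k - 1 - (l : ℕ)) * v l))
      Filter.atTop
      (nhds ((1 / (1 - (q : ℚ_[p])) ^ n) * ∑ i ∈ Finset.range (n + 1),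
        (-1 : ℚ_[p]) ^ i * (Nat.choose n i : ℚ_[p]) * (q : ℚ_[p]) ^ (i * x) *
          ∏ j ∈ Finset.Icc 1 k, ((i + j : ℕ) : ℚ_[p]) / qnum (q : ℚ_[p]) (i + j))) :=
  multivariate_qVolkenborn_qBernoulliPoly_general p q hq1 hq k n x
end
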